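/- On V^{⊗(n+1)}, the identity (Aₙ⊗1)R_{1,n+1}⋯R_{n,n+1}(Aₙ⊗1) = s·M_{n+1}(Aₙ⊗1) holds, where M = diag((rs)^{n−1}, (rs)^{n−2}, …, 1) acts in the last factor. -/

import Mathlib

noncomputable def Rmat (n : ℕ) (r s : ℂ) :
    Matrix (Fin n × Fin n) (Fin n × Fin n) ℂ := fun p q =>
  (if q = p then (if p.1 = p.2 then s else if p.2 < p.1 then r * s else 1) else 0)
    + (if q = (p.2, p.1) ∧ p.2 < p.1 then s - r else 0)

/-- The length (number of inversions) of a permutation of `Fin n`. -/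
def invNum {n : ℕ} (σ : Equiv.Perm (Fin n)) : ℕ :=
  (Finset.univ.filter fun p : Fin n × Fin n => p.1 < p.2 ∧ σ p.2 < σ p.1).card

/-- The two-parameter factorial `[n]_{r,s}! = Π_{k=1}^n (s^k - r^k)/(s - r)`. -/
noncomputable def qfact (n : ℕ) (r s : ℂ) : ℂ :=
  ∏ k ∈ Finset.range n, (s ^ (k + 1) - r ^ (k + 1)) / (s - r)

/-- The antisymmetric covector `⟨ε|`. -/
noncomputable def epsCov (n : ℕ) (r s : ℂ) : (Fin n → Fin n) → ℂ := fun f =>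
  (qfact n r s)⁻¹ *
    ∑ σ : Equiv.Perm (Fin n), if f = ⇑σ then (-s) ^ invNum σ else 0

/-- The antisymmetric vector `|ε⟩`. -/
noncomputable def epsVec (n : ℕ) (r s : ℂ) : (Fin n → Fin n) → ℂ := fun f =>
  r ^ (n * (n - 1) / 2) *
    ∑ σ : Equiv.Perm (Fin n), if f = ⇑σ then ((-r) ^ invNum σ)⁻¹ else 0

/-- `Aₙ ⊗ 1` on `V^{⊗(n+1)}`: the rank-one antisymmetrizer `|ε⟩⟨ε|` on the
first `n` tensor factors, identity on the last. -/
noncomputable def AmatExt (n : ℕ) (r s : ℂ) :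
    Matrix (Fin (n + 1) → Fin n) (Fin (n + 1) → Fin n) ℂ := fun f g =>
  epsVec n r s (f ∘ Fin.castSucc) * epsCov n r s (g ∘ Fin.castSucc) *
    (if f (Fin.last n) = g (Fin.last n) then 1 else 0)

/-- A matrix on `V ⊗ V` acting at two distinct tensor positions `p, q` of a
tensor power of `V` indexed by `ι`. -/
noncomputable def liftTwo {n : ℕ} {ι : Type*} [Fintype ι] [DecidableEq ι]
    (p q : ι) (B : Matrix (Fin n × Fin n) (Fin n × Fin n) ℂ) :
    Matrix (ι → Fin n) (ι → Fin n) ℂ := fun f g =>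
  B (f p, f q) (g p, g q) *
    ∏ x : ι, if x = p ∨ x = q then 1 else if f x = g x then 1 else 0

/-- `M_{n+1} = 1^{⊗n} ⊗ M` with `M = diag((rs)^{n-1}, (rs)^{n-2}, …, 1)`,
acting in the last tensor factor of `V^{⊗(n+1)}`. -/
noncomputable def MmatExt (n : ℕ) (r s : ℂ) :
    Matrix (Fin (n + 1) → Fin n) (Fin (n + 1) → Fin n) ℂ := fun f g =>
  if f = g then (r * s) ^ (n - 1 - (f (Fin.last n) : ℕ)) else 0

/-! Factor `Aₙ ⊗ 1 = P Q` with `P = |ε⟩ ⊗ 1` and `Q = ⟨ε| ⊗ 1`, so that everything reduces to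
`Q T P` for `T = R_{1,n+1} ⋯ R_{n,n+1}`. Each `R_{i,n+1}` either acts diagonally or strictly
lowers the `i`-th index, so an entry of `T` between basis vectors whose first `n` indices are
permutations `σ`, `τ` vanishes unless `τ ≤ σ` pointwise, i.e. `τ = σ`; on such a vector with last
index `a` the chain is diagonal with eigenvalue `s (rs)^{n-1-a}`. Hence `Q T P = s • Q M P`, and
`Q P = ⟨ε|ε⟩ = 1` because `∑_σ q^{ℓ(σ)}` is the `q`-factorial: inserting the largest letter at
position `j` of a permutation of `n` letters adds `n - j` inversions. -/

open Finset Equiv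

section Inversions

variable {n : ℕ}

def insertMax (j : Fin (n + 1)) (e : Perm (Fin n)) : Perm (Fin (n + 1)) :=
  (finSuccEquiv' j).trans ((optionCongr e).trans (finSuccEquiv' (Fin.last n)).symm)

@[simp]
theorem insertMax_apply_self (j : Fin (n + 1)) (e : Perm (Fin n)) :
    insertMax j e j = Fin.last n := by
  simp [insertMax]

@[simp]
theorem insertMax_apply_succAbove (j : Fin (n + 1)) (e : Perm (Fin n)) (m : Fin n) :
    insertMax j e (j.succAbove m) = Fin.castSucc (e m) := by
  simp [insertMax, ← Fin.succAbove_last]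

theorem insertMax_bijective :
    Function.Bijective fun p : Fin (n + 1) × Perm (Fin n) => insertMax p.1 p.2 := by
  refine (Fintype.bijective_iff_injective_and_card _).2
    ⟨?_, by simp [Fintype.card_perm, Nat.factorial_succ]⟩
  rintro ⟨j, e⟩ ⟨j', e'⟩ h
  dsimp only at h
  obtain rfl : j = j' := (insertMax j' e').injective <| by
    rw [insertMax_apply_self, ← h, insertMax_apply_self]
  have he : e = e' := Perm.ext fun m => Fin.castSucc_injective _ <| by
    rw [← insertMax_apply_succAbove, h, insertMax_apply_succAbove]
  rw [he]

theorem invNum_eq_sum (σ : Perm (Fin n)) :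
    invNum σ = ∑ x, ∑ y, if x < y ∧ σ y < σ x then 1 else 0 := by
  rw [invNum, card_filter, Fintype.sum_prod_type]

theorem card_filter_le_castSucc (j : Fin (n + 1)) :
    #{b : Fin n | j ≤ Fin.castSucc b} = n - j := by
  induction j using Fin.lastCases with
  | last => simp [Fin.le_def]
  | cast j => simp [filter_le_eq_Ici]

theorem invNum_insertMax (j : Fin (n + 1)) (e : Perm (Fin n)) :
    invNum (insertMax j e) = invNum e + (n - j) := by
  simp only [invNum_eq_sum, Fin.sum_univ_succAbove _ j, insertMax_apply_self,
    insertMax_apply_succAbove, not_lt.2 (Fin.le_last _), and_false, ↓reduceIte, sum_boole,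
    Nat.cast_id, zero_add, Fin.lt_succAbove_iff_le_castSucc, Fin.castSucc_lt_last, and_true,
    card_filter_le_castSucc, Fin.succAbove_lt_succAbove_iff, Fin.castSucc_lt_castSucc_iff]
  ring

theorem sum_pow_invNum {R : Type*} [CommSemiring R] (q : R) (n : ℕ) :
    ∑ σ : Perm (Fin n), q ^ invNum σ = ∏ k ∈ range n, ∑ i ∈ range (k + 1), q ^ i := by
  induction n with
  | zero => simp [invNum]
  | succ n ih =>
    have hlast : ∑ j : Fin (n + 1), q ^ (n - j : ℕ) = ∑ i ∈ range (n + 1), q ^ i := by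
      rw [Fintype.sum_equiv Fin.revPerm _ (fun j => q ^ (j : ℕ)) (fun j => by simp),
        Fin.sum_univ_eq_sum_range (q ^ ·)]
    rw [prod_range_succ, ← ih, ← hlast, sum_mul_sum,
      ← Fintype.sum_bijective _ insertMax_bijective _ _ fun _ => rfl, Fintype.sum_prod_type,
      sum_comm]
    simp only [invNum_insertMax, pow_add]

end Inversions

section Normalization

variable {n : ℕ} {r s : ℂ}

theorem exists_perm_of_sum_ite_ne_zero {M : Type*} [AddCommMonoid M] {u : Fin n → Fin n}
    {w : Perm (Fin n) → M} (h : (∑ σ : Perm (Fin n), if u = ⇑σ then w σ else 0) ≠ 0) :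
    ∃ σ : Perm (Fin n), u = σ := by
  obtain ⟨σ, -, hσ⟩ := exists_ne_zero_of_sum_ne_zero h
  exact ⟨σ, by_contra fun hu => hσ (if_neg hu)⟩

theorem exists_perm_of_epsCov_ne_zero {u : Fin n → Fin n} (h : epsCov n r s u ≠ 0) :
    ∃ σ : Perm (Fin n), u = σ :=
  exists_perm_of_sum_ite_ne_zero (right_ne_zero_of_mul h)

theorem exists_perm_of_epsVec_ne_zero {u : Fin n → Fin n} (h : epsVec n r s u ≠ 0) :
    ∃ σ : Perm (Fin n), u = σ :=
  exists_perm_of_sum_ite_ne_zero (right_ne_zero_of_mul h)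

theorem epsCov_coe (σ : Perm (Fin n)) :
    epsCov n r s σ = (qfact n r s)⁻¹ * (-s) ^ invNum σ := by
  simp [epsCov]

theorem epsVec_coe (σ : Perm (Fin n)) :
    epsVec n r s σ = r ^ (n * (n - 1) / 2) * ((-r) ^ invNum σ)⁻¹ := by
  simp [epsVec]

theorem sum_eq_sum_perm {M : Type*} [AddCommMonoid M] {F : (Fin n → Fin n) → M}
    (hF : ∀ u, F u ≠ 0 → ∃ σ : Perm (Fin n), u = σ) :
    ∑ u, F u = ∑ σ : Perm (Fin n), F σ := by
  refine (sum_of_injOn (fun σ : Perm (Fin n) => ⇑σ) DFunLike.coe_injective.injOn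
    (fun _ _ => mem_coe.2 (mem_univ _)) (fun u _ hu => ?_) fun _ _ => rfl).symm
  by_contra h
  obtain ⟨σ, rfl⟩ := hF u h
  exact hu ⟨σ, mem_coe.2 (mem_univ σ), rfl⟩

theorem pow_mul_geom_sum_div_eq (hr : r ≠ 0) (hsr : s ≠ r) (k : ℕ) :
    r ^ k * ∑ i ∈ range (k + 1), (s / r) ^ i = (s ^ (k + 1) - r ^ (k + 1)) / (s - r) := by
  have hsr' : s - r ≠ 0 := sub_ne_zero.2 hsr
  rw [geom_sum_eq (by rwa [Ne, div_eq_one_iff_eq hr]), div_pow, pow_succ r]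
  field_simp

theorem qfact_eq_pow_mul_sum_pow_invNum (hr : r ≠ 0) (hf : qfact n r s ≠ 0) :
    qfact n r s = r ^ (n * (n - 1) / 2) * ∑ σ : Perm (Fin n), (s / r) ^ invNum σ := by
  rw [sum_pow_invNum, ← sum_range_id, ← prod_pow_eq_pow_sum, ← prod_mul_distrib, qfact]
  refine prod_congr rfl fun k hk => ?_
  have hsr : s ≠ r := fun h => hf (prod_eq_zero hk (by simp [h]))
  exact (pow_mul_geom_sum_div_eq hr hsr k).symm

theorem sum_epsCov_mul_epsVec (hr : r ≠ 0) (hf : qfact n r s ≠ 0) :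
    ∑ u, epsCov n r s u * epsVec n r s u = 1 := by
  have hterm (σ : Perm (Fin n)) : epsCov n r s σ * epsVec n r s σ
      = (qfact n r s)⁻¹ * (r ^ (n * (n - 1) / 2) * (s / r) ^ invNum σ) := by
    rw [epsCov_coe, epsVec_coe, ← neg_div_neg_eq s r, div_pow]
    ring
  rw [sum_eq_sum_perm fun u hu => exists_perm_of_epsCov_ne_zero (left_ne_zero_of_mul hu),
    sum_congr rfl fun σ _ => hterm σ, ← mul_sum, ← mul_sum,
    ← qfact_eq_pow_mul_sum_pow_invNum hr hf, inv_mul_cancel₀ hf]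

end Normalization

section RmatChain

variable {n : ℕ} {r s : ℂ}

theorem liftTwo_ne_zero_iff {ι : Type*} [Fintype ι] [DecidableEq ι] {p q : ι}
    {B : Matrix (Fin n × Fin n) (Fin n × Fin n) ℂ} {f g : ι → Fin n} :
    liftTwo p q B f g ≠ 0 ↔ B (f p, f q) (g p, g q) ≠ 0 ∧ ∀ x, x ≠ p → x ≠ q → f x = g x := by
  simp only [liftTwo, ne_eq, mul_eq_zero, prod_eq_zero_iff, mem_univ, true_and, not_or,
    not_exists]
  refine and_congr_right fun _ => forall_congr' fun x => ?_
  by_cases hx : x = p ∨ x = q <;> aesop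

theorem liftTwo_apply_self {ι : Type*} [Fintype ι] [DecidableEq ι] (p q : ι)
    (B : Matrix (Fin n × Fin n) (Fin n × Fin n) ℂ) (f : ι → Fin n) :
    liftTwo p q B f f = B (f p, f q) (f p, f q) := by
  simp [liftTwo]

theorem Rmat_ne_zero {p q : Fin n × Fin n} (h : Rmat n r s p q ≠ 0) :
    q = p ∨ q = p.swap ∧ p.2 < p.1 := by
  by_contra! hpq
  refine h ?_
  rw [Rmat, if_neg hpq.1, if_neg fun h' => (hpq.2 h'.1).not_gt h'.2]
  simp

theorem Rmat_apply_self (p : Fin n × Fin n) :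
    Rmat n r s p p = if p.1 = p.2 then s else if p.2 < p.1 then r * s else 1 := by
  rw [Rmat, if_pos rfl, add_eq_left, ite_eq_right_iff]
  exact fun h => (h.2.ne' (congrArg Prod.fst h.1)).elim

theorem prod_Rmat_apply_self (a : Fin n) :
    ∏ x, Rmat n r s (x, a) (x, a) = s * (r * s) ^ (n - 1 - (a : ℕ)) := by
  have hsplit (x : Fin n) :
      Rmat n r s (x, a) (x, a) = (if x = a then s else 1) * (if a < x then r * s else 1) := by
    rw [Rmat_apply_self]
    split_ifs <;> simp_all
  rw [prod_congr rfl fun x _ => hsplit x, prod_mul_distrib, prod_ite_eq', prod_ite, prod_const,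
    prod_const_one, mul_one, filter_lt_eq_Ioi, Fin.card_Ioi, if_pos (mem_univ a)]

noncomputable def RmatChain (n : ℕ) (r s : ℂ) (l : List (Fin n)) :
    Matrix (Fin (n + 1) → Fin n) (Fin (n + 1) → Fin n) ℂ :=
  (l.map fun i => liftTwo (Fin.castSucc i) (Fin.last n) (Rmat n r s)).prod

theorem RmatChain_cons_apply (i : Fin n) (l : List (Fin n)) (f g : Fin (n + 1) → Fin n) :
    RmatChain n r s (i :: l) f g
      = ∑ g', liftTwo i.castSucc (Fin.last n) (Rmat n r s) f g' * RmatChain n r s l g' g := by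
  rw [RmatChain, List.map_cons, List.prod_cons, Matrix.mul_apply]
  rfl

theorem eq_or_lt_of_liftTwo_Rmat_ne_zero {i : Fin n} {f g : Fin (n + 1) → Fin n}
    (h : liftTwo i.castSucc (Fin.last n) (Rmat n r s) f g ≠ 0) :
    g = f ∨ g i.castSucc < f i.castSucc ∧ ∀ j ≠ i, g j.castSucc = f j.castSucc := by
  obtain ⟨hB, hfg⟩ := liftTwo_ne_zero_iff.1 h
  have hoff (j : Fin n) (hj : j ≠ i) : g j.castSucc = f j.castSucc :=
    (hfg _ (Fin.castSucc_injective _ |>.ne hj) (Fin.castSucc_lt_last j).ne).symm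
  rcases Rmat_ne_zero hB with heq | ⟨hswap, hlt⟩
  · simp only [Prod.ext_iff] at heq
    refine .inl (funext fun x => Fin.lastCases (motive := fun x => g x = f x) heq.2 (fun j => ?_) x)
    by_cases hj : j = i
    · exact hj ▸ heq.1
    · exact hoff j hj
  · simp only [Prod.ext_iff, Prod.fst_swap, Prod.snd_swap] at hswap
    exact .inr ⟨hswap.1 ▸ hlt, hoff⟩

theorem RmatChain_ne_zero {l : List (Fin n)} {f g : Fin (n + 1) → Fin n}
    (h : RmatChain n r s l f g ≠ 0) (j : Fin n) :
    g j.castSucc ≤ f j.castSucc ∧ (j ∉ l → g j.castSucc = f j.castSucc) := by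
  induction l generalizing f with
  | nil =>
    rw [RmatChain, List.map_nil, List.prod_nil, Matrix.one_apply] at h
    rw [(by by_contra hfg; exact h (if_neg hfg) : f = g)]
    exact ⟨le_rfl, fun _ => rfl⟩
  | cons i l ih =>
    rw [RmatChain_cons_apply] at h
    obtain ⟨g', -, hg'⟩ := exists_ne_zero_of_sum_ne_zero h
    obtain ⟨hL, hR⟩ := ih (right_ne_zero_of_mul hg')
    rcases eq_or_lt_of_liftTwo_Rmat_ne_zero (left_ne_zero_of_mul hg') with rfl | ⟨hlt, hoff⟩
    · exact ⟨hL, fun hj => hR fun hjl => hj (List.mem_cons_of_mem _ hjl)⟩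
    · refine ⟨hL.trans ?_, fun hj => ?_⟩
      · obtain rfl | hji := eq_or_ne j i
        exacts [hlt.le, (hoff j hji).le]
      · rw [List.mem_cons, not_or] at hj
        exact (hR hj.2).trans (hoff j hj.1)

theorem RmatChain_apply_of_nodup {l : List (Fin n)} (hl : l.Nodup) {f g : Fin (n + 1) → Fin n}
    (hfg : ∀ j : Fin n, g j.castSucc = f j.castSucc) :
    RmatChain n r s l f g = if f = g then
      (l.map fun j => Rmat n r s (f j.castSucc, f (Fin.last n)) (f j.castSucc, f (Fin.last n))).prod
      else 0 := by
  induction l with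
  | nil => simp [RmatChain, Matrix.one_apply]
  | cons i l ih =>
    rw [List.nodup_cons] at hl
    rw [RmatChain_cons_apply, sum_eq_single f, liftTwo_apply_self, ih hl.2, List.map_cons,
      List.prod_cons, mul_ite, mul_zero]
    · intro g' _ hg'
      by_contra h
      rcases eq_or_lt_of_liftTwo_Rmat_ne_zero (left_ne_zero_of_mul h) with rfl | ⟨hlt, -⟩
      · exact hg' rfl
      · have hgi := (RmatChain_ne_zero (right_ne_zero_of_mul h) i).2 hl.1
        rw [hfg] at hgi
        exact (hgi ▸ hlt).false
    · simp

end RmatChain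

theorem Equiv.Perm.eq_one_of_forall_apply_le {α : Type*} [Finite α] [PartialOrder α]
    {ρ : Perm α} (h : ∀ x, ρ x ≤ x) : ρ = 1 := by
  have hpow (m : ℕ) (x : α) : (ρ ^ m) x ≤ x := by
    induction m generalizing x with
    | zero => rfl
    | succ m ih => rw [pow_succ, Perm.mul_apply]; exact (ih _).trans (h x)
  obtain ⟨k, hk, hρk⟩ := (isOfFinOrder_of_finite ρ).exists_pow_eq_one
  ext x
  refine le_antisymm (h x) ?_
  calc x = (ρ ^ (k - 1 + 1)) x := by rw [Nat.sub_add_cancel hk, hρk, Perm.one_apply]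
    _ = (ρ ^ (k - 1)) (ρ x) := by rw [pow_succ, Perm.mul_apply]
    _ ≤ ρ x := hpow _ _

theorem Equiv.Perm.eq_of_forall_apply_le {α : Type*} [Finite α] [PartialOrder α]
    {σ τ : Perm α} (h : ∀ x, τ x ≤ σ x) : τ = σ := by
  refine mul_inv_eq_one.1 (Perm.eq_one_of_forall_apply_le fun y => ?_)
  simpa using h (σ⁻¹ y)

section Tensor

variable {n : ℕ} {r s : ℂ}

theorem RmatChain_finRange_apply_of_perm {f g : Fin (n + 1) → Fin n} {σ τ : Perm (Fin n)}
    (hf : f ∘ Fin.castSucc = σ) (hg : g ∘ Fin.castSucc = τ) :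
    RmatChain n r s (List.finRange n) f g = s * MmatExt n r s f g := by
  have hdiag := RmatChain_apply_of_nodup (r := r) (s := s) (List.nodup_finRange n) (f := f) (g := g)
  have hfσ (j : Fin n) : f j.castSucc = σ j := congrFun hf j
  by_cases hfg : f = g
  · subst hfg
    rw [hdiag fun _ => rfl, if_pos rfl, MmatExt, if_pos rfl, ← Fin.prod_univ_def]
    simp only [hfσ]
    rw [Equiv.prod_comp σ fun x => Rmat n r s (x, f (Fin.last n)) (x, f (Fin.last n)),
      prod_Rmat_apply_self]
  · rw [MmatExt, if_neg hfg, mul_zero]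
    by_contra hne
    have hτσ : τ = σ := Perm.eq_of_forall_apply_le fun j => by
      simpa [← hfσ, ← congrFun hg j] using (RmatChain_ne_zero hne j).1
    rw [hdiag (fun j => (congrFun hg j).trans (hτσ ▸ (hfσ j).symm)), if_neg hfg] at hne
    exact hne rfl

/-- `|ε⟩ ⊗ 1 : V → V^{⊗(n+1)}`. -/
noncomputable def epsVecTensor (n : ℕ) (r s : ℂ) : Matrix (Fin (n + 1) → Fin n) (Fin n) ℂ :=
  fun f c => epsVec n r s (f ∘ Fin.castSucc) * if f (Fin.last n) = c then 1 else 0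

/-- `⟨ε| ⊗ 1 : V^{⊗(n+1)} → V`. -/
noncomputable def epsCovTensor (n : ℕ) (r s : ℂ) : Matrix (Fin n) (Fin (n + 1) → Fin n) ℂ :=
  fun c g => epsCov n r s (g ∘ Fin.castSucc) * if c = g (Fin.last n) then 1 else 0

theorem AmatExt_eq_mul : AmatExt n r s = epsVecTensor n r s * epsCovTensor n r s := by
  ext f g
  simp [AmatExt, epsVecTensor, epsCovTensor, Matrix.mul_apply]

theorem epsCovTensor_mul_epsVecTensor (hr : r ≠ 0) (hf : qfact n r s ≠ 0) :
    epsCovTensor n r s * epsVecTensor n r s = 1 := by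
  ext a b
  rw [Matrix.mul_apply, ← (Fin.snocEquiv fun _ => Fin n).sum_comp, Fintype.sum_prod_type]
  simp [epsCovTensor, epsVecTensor, Matrix.one_apply, Fin.snocEquiv, sum_epsCov_mul_epsVec hr hf]

theorem MmatExt_mul_epsVecTensor :
    MmatExt n r s * epsVecTensor n r s
      = epsVecTensor n r s * Matrix.diagonal fun c : Fin n => (r * s) ^ (n - 1 - (c : ℕ)) := by
  ext f c
  rw [Matrix.mul_diagonal, Matrix.mul_apply]
  simp only [MmatExt, ite_mul, zero_mul, sum_ite_eq, mem_univ, if_true, epsVecTensor]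
  split_ifs with h
  · rw [h]
    ring
  · simp

theorem epsCovTensor_mul_RmatChain_mul_epsVecTensor :
    epsCovTensor n r s * RmatChain n r s (List.finRange n) * epsVecTensor n r s
      = s • (epsCovTensor n r s * MmatExt n r s * epsVecTensor n r s) := by
  ext a b
  simp only [Matrix.mul_apply, Matrix.smul_apply, smul_eq_mul, sum_mul, mul_sum]
  refine sum_congr rfl fun g' _ => sum_congr rfl fun g _ => ?_
  by_cases hQ : epsCovTensor n r s a g = 0
  · simp [hQ]
  by_cases hP : epsVecTensor n r s g' b = 0
  · simp [hP]
  obtain ⟨σ, hσ⟩ := exists_perm_of_epsCov_ne_zero (left_ne_zero_of_mul hQ)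
  obtain ⟨τ, hτ⟩ := exists_perm_of_epsVec_ne_zero (left_ne_zero_of_mul hP)
  rw [RmatChain_finRange_apply_of_perm hσ hτ]
  ring

end Tensor

theorem stmt12_general (n : ℕ) (r s : ℂ) (hr : r ≠ 0)
    (hf : qfact n r s ≠ 0) :
    AmatExt n r s *
        ((List.finRange n).map fun i =>
          liftTwo (Fin.castSucc i) (Fin.last n) (Rmat n r s)).prod *
        AmatExt n r s
      = s • (MmatExt n r s * AmatExt n r s) := by
  change AmatExt n r s * RmatChain n r s (List.finRange n) * AmatExt n r s = _
  set P := epsVecTensor n r s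
  set Q := epsCovTensor n r s
  set D := Matrix.diagonal fun c : Fin n => (r * s) ^ (n - 1 - (c : ℕ))
  have hQP : Q * P = 1 := epsCovTensor_mul_epsVecTensor hr hf
  have hMP : MmatExt n r s * P = P * D := MmatExt_mul_epsVecTensor
  have hQTP : Q * RmatChain n r s (List.finRange n) * P = s • (Q * MmatExt n r s * P) :=
    epsCovTensor_mul_RmatChain_mul_epsVecTensor
  rw [AmatExt_eq_mul]
  calc P * Q * RmatChain n r s (List.finRange n) * (P * Q)
      = P * (Q * RmatChain n r s (List.finRange n) * P) * Q := by simp only [Matrix.mul_assoc]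
    _ = s • (P * (Q * (MmatExt n r s * P)) * Q) := by
      rw [hQTP, Matrix.mul_smul, Matrix.smul_mul, Matrix.mul_assoc Q]
    _ = s • (P * (Q * P) * D * Q) := by rw [hMP]; simp only [Matrix.mul_assoc]
    _ = s • (MmatExt n r s * (P * Q)) := by rw [hQP, Matrix.mul_one, ← hMP, Matrix.mul_assoc]

/-- on `V^{⊗(n+1)}`,
`(Aₙ⊗1) R_{1,n+1} ⋯ R_{n,n+1} (Aₙ⊗1) = s ⬝ M_{n+1} (Aₙ⊗1)`. -/
theorem stmt12 (n : ℕ) (r s : ℂ) (hr : r ≠ 0) (hs : s ≠ 0)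
    (hf : qfact n r s ≠ 0) :
    AmatExt n r s *
        ((List.finRange n).map fun i =>
          liftTwo (Fin.castSucc i) (Fin.last n) (Rmat n r s)).prod *
        AmatExt n r s
      = s • (MmatExt n r s * AmatExt n r s) :=
  stmt12_general n r s hr hf
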